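/- For 2 ≤ r ≤ 8, if E and F are distinct exceptional classes in ℤ^{r+1}, then (E,F) ∈ {0, 1, 2, 3}, and (E,F) = 3 occurs only when r = 8, in which case E + F = -2K. -/
import Mathlib


/-- The Del Pezzo intersection form on `ℤ^{r+1}`: `(l_0,l_0)=1`, `(l_i,l_i)=-1` for `i ≥ 1`,
`(l_i,l_j)=0` for `i ≠ j`. -/
def dpB {r : ℕ} (x y : Fin (r + 1) → ℤ) : ℤ :=
  x 0 * y 0 - ∑ i : Fin r, x i.succ * y i.succ

/-- The anticanonical class `-K = 3 l_0 - l_1 - ⋯ - l_r`. -/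
def negK {r : ℕ} : Fin (r + 1) → ℤ := fun i => if i = 0 then 3 else -1

/-- The standard basis vector `l_i`. -/
def l {r : ℕ} (i : Fin (r + 1)) : Fin (r + 1) → ℤ := fun j => if j = i then 1 else 0

/-- An exceptional class: `(E,E) = -1` and `(E,-K) = 1`. -/
def IsExc {r : ℕ} (E : Fin (r + 1) → ℤ) : Prop := dpB E E = -1 ∧ dpB E negK = 1

/-- A root: `(α,α) = -2` and `(α,-K) = 0`. -/
def IsRoot {r : ℕ} (a : Fin (r + 1) → ℤ) : Prop := dpB a a = -2 ∧ dpB a negK = 0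

/-- A ruling: `(D,D) = 0` and `(D,-K) = 2`. -/
def IsRuling {r : ℕ} (D : Fin (r + 1) → ℤ) : Prop := dpB D D = 0 ∧ dpB D negK = 2

/-- The reflection `σ_α(x) = x + (x,α) α`. -/
def reflct {r : ℕ} (a x : Fin (r + 1) → ℤ) : Fin (r + 1) → ℤ :=
  fun i => x i + dpB x a * a i

lemma dpB_comm {r : ℕ} (x y : Fin (r + 1) → ℤ) : dpB x y = dpB y x := by
  unfold dpB
  rw [mul_comm]
  congr 1
  exact Finset.sum_congr rfl fun i _ => mul_comm _ _

lemma dpB_add_left {r : ℕ} (x y z : Fin (r + 1) → ℤ) :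
    dpB (x + y) z = dpB x z + dpB y z := by
  unfold dpB
  simp [Pi.add_apply, add_mul, Finset.sum_add_distrib]
  ring

lemma dpB_sub_left {r : ℕ} (x y z : Fin (r + 1) → ℤ) :
    dpB (x - y) z = dpB x z - dpB y z := by
  unfold dpB
  simp [Pi.sub_apply, sub_mul, Finset.sum_sub_distrib]
  ring

lemma dpB_smul_left {r : ℕ} (c : ℤ) (x z : Fin (r + 1) → ℤ) :
    dpB (c • x) z = c * dpB x z := by
  unfold dpB
  simp [Pi.smul_apply, smul_eq_mul, Finset.mul_sum, mul_sub, mul_assoc]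

lemma dpB_negK {r : ℕ} (x : Fin (r + 1) → ℤ) :
    dpB x negK = 3 * x 0 + ∑ i : Fin r, x i.succ := by
  unfold dpB negK
  simp [Fin.succ_ne_zero]
  ring

lemma dpB_negK_negK {r : ℕ} : dpB (negK (r := r)) negK = 9 - r := by
  rw [dpB_negK]
  simp [negK, Fin.succ_ne_zero]
  ring

lemma key {r : ℕ} (hr : r ≤ 8) (x : Fin (r + 1) → ℤ) (h0 : dpB x negK = 0) :
    dpB x x ≤ 0 ∧ (dpB x x = 0 → x = 0) := by
  rw [dpB_negK] at h0
  have hcs : (∑ i : Fin r, x i.succ) ^ 2 ≤ r * ∑ i : Fin r, (x i.succ) ^ 2 := by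
    simpa using sq_sum_le_card_mul_sum_sq (s := Finset.univ) (f := fun i : Fin r => x i.succ)
  have hQ : (0:ℤ) ≤ ∑ i : Fin r, (x i.succ) ^ 2 :=
    Finset.sum_nonneg fun i _ => sq_nonneg _
  have hS : (∑ i : Fin r, x i.succ) = -3 * x 0 := by linarith
  have hkey : 9 * (x 0)^2 ≤ 8 * ∑ i : Fin r, (x i.succ) ^ 2 := by
    rw [hS] at hcs
    nlinarith [sq_nonneg (x 0), hcs, hQ, hr]
  have hBq : dpB x x = (x 0)^2 - ∑ i : Fin r, (x i.succ)^2 := by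
    simp only [dpB, pow_two]
  constructor
  · nlinarith [sq_nonneg (x 0)]
  · intro hz
    rw [hBq] at hz
    have hx0 : x 0 = 0 := by nlinarith [sq_nonneg (x 0)]
    have hQ0 : ∑ i : Fin r, (x i.succ)^2 = 0 := by nlinarith
    funext j
    refine Fin.cases hx0 (fun i => ?_) j
    have := (Finset.sum_eq_zero_iff_of_nonneg (fun i _ => sq_nonneg (x i.succ))).mp hQ0 i (Finset.mem_univ i)
    exact pow_eq_zero_iff (n := 2) (by norm_num) |>.mp this

lemma dpB_add_right {r : ℕ} (x y z : Fin (r + 1) → ℤ) :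
    dpB x (y + z) = dpB x y + dpB x z := by
  rw [dpB_comm, dpB_add_left, dpB_comm y x, dpB_comm z x]

lemma dpB_sub_right {r : ℕ} (x y z : Fin (r + 1) → ℤ) :
    dpB x (y - z) = dpB x y - dpB x z := by
  rw [dpB_comm, dpB_sub_left, dpB_comm y x, dpB_comm z x]

lemma dpB_smul_right {r : ℕ} (c : ℤ) (x z : Fin (r + 1) → ℤ) :
    dpB x (c • z) = c * dpB x z := by
  rw [dpB_comm, dpB_smul_left, dpB_comm z x]

/-- For distinct exceptional classes, `(E,F) ∈ {0,1,2,3}`, and `(E,F) = 3` forces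
`r = 8` and `E + F = -2K`. -/
theorem stmt7 (r : ℕ) (h1 : 2 ≤ r) (h2 : r ≤ 8) (E F : Fin (r + 1) → ℤ)
    (hE : IsExc E) (hF : IsExc F) (hne : E ≠ F) :
    dpB E F ∈ ({0, 1, 2, 3} : Set ℤ) ∧
    (dpB E F = 3 → r = 8 ∧ E + F = (2 : ℤ) • negK) := by
  obtain ⟨hEE, hEK⟩ := hE
  obtain ⟨hFF, hFK⟩ := hF
  set m := dpB E F with hm
  have hFE : dpB F E = m := by rw [dpB_comm]
  -- lower bound via E - F
  have hDK : dpB (E - F) negK = 0 := by rw [dpB_sub_left, hEK, hFK]; ring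
  have hDD : dpB (E - F) (E - F) = -2 - 2 * m := by
    rw [dpB_sub_left, dpB_sub_right, dpB_sub_right, hEE, hFF, hFE, ← hm]; ring
  have hkeyD := key h2 (E - F) hDK
  have hDne : E - F ≠ 0 := sub_ne_zero.mpr hne
  have hm0 : 0 ≤ m := by
    by_contra h
    have hle := hkeyD.1
    rw [hDD] at hle
    have : m = -1 := by omega
    exact hDne (hkeyD.2 (by rw [hDD, this]; ring))
  -- upper bound via (9-r)•(E+F) - 2•negK
  have hr8 : (r : ℤ) ≤ 8 := by exact_mod_cast h2
  set c : ℤ := 9 - (r : ℤ) with hcdef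
  have hc : 1 ≤ c := by omega
  have hSS : dpB (E + F) (E + F) = -2 + 2 * m := by
    rw [dpB_add_left, dpB_add_right, dpB_add_right, hEE, hFF, hFE, ← hm]; ring
  have hSK : dpB (E + F) negK = 2 := by rw [dpB_add_left, hEK, hFK]; norm_num
  set v : Fin (r + 1) → ℤ := c • (E + F) - (2 : ℤ) • negK with hvdef
  have hvK : dpB v negK = 0 := by
    rw [hvdef, dpB_sub_left, dpB_smul_left, dpB_smul_left, hSK, dpB_negK_negK, hcdef]; ring
  have hKS : dpB negK (E + F) = 2 := by rw [dpB_comm, hSK]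
  have hvv : dpB v v = c * c * (2 * m - 2) - 4 * c := by
    simp only [hvdef, dpB_sub_left, dpB_sub_right, dpB_smul_left, dpB_smul_right, hSS, hSK,
      hKS, dpB_negK_negK, hcdef]
    ring
  have hkeyV := key h2 v hvK
  have hv1 := hkeyV.1
  rw [hvv] at hv1
  have hm3 : m ≤ 3 := by nlinarith
  refine ⟨by simp only [Set.mem_insert_iff, Set.mem_singleton_iff]; omega, fun h3 => ?_⟩
  have hc1 : c = 1 := by nlinarith
  have hr : r = 8 := by omega
  have hv0 : v = 0 := hkeyV.2 (by rw [hvv, hc1, h3]; ring)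
  refine ⟨hr, ?_⟩
  have : E + F - (2 : ℤ) • negK = 0 := by
    rw [hvdef, hc1, one_smul] at hv0; exact hv0
  linear_combination (norm := abel) this
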